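/- Let S be a countable ℵ₀-categorical semigroup. Then every principal factor of S is ℵ₀-categorical, and each principal factor is completely 0-simple, completely simple, or null. Moreover, S has only finitely many principal factors up to isomorphism. -/

import Mathlib

/-- Two `n`-tuples of a semigroup are automorphically equivalent if some semigroup
automorphism maps one to the other componentwise. -/
def AutRel (S : Type*) [Semigroup S] {n : ℕ} (a b : Fin n → S) : Prop :=
  ∃ φ : S ≃* S, ∀ k, φ (a k) = b k

/-- A semigroup is ℵ₀-categorical if, for every `n ≥ 1`, the action of its automorphism
group on `n`-tuples has only finitely many orbits. -/
def Aleph0Categorical (S : Type*) [Semigroup S] : Prop :=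
  ∀ n : ℕ, 1 ≤ n → ∃ t : Set (Fin n → S), t.Finite ∧
    ∀ a : Fin n → S, ∃ b ∈ t, AutRel S b a

section PrincipalFactors

variable (S : Type*) [Semigroup S]

/-- The principal two-sided ideal `J(a) = {a} ∪ aS ∪ Sa ∪ SaS` as a set. -/
def jSet (a : S) : Set S :=
  {a} ∪ {x | ∃ s, x = a * s} ∪ {x | ∃ s, x = s * a} ∪ {x | ∃ s u, x = s * a * u}

/-- The principal two-sided ideal `J(a)` as a subsemigroup. -/
def jSub (a : S) : Subsemigroup S where
  carrier := jSet S a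
  mul_mem' := by
    intro x y hx hy
    rcases hy with ((rfl | ⟨s, rfl⟩) | ⟨s, rfl⟩) | ⟨s, u, rfl⟩
    · exact Or.inl (Or.inr ⟨x, rfl⟩)
    · exact Or.inr ⟨x, s, by simp [mul_assoc]⟩
    · exact Or.inl (Or.inr ⟨x * s, by simp [mul_assoc]⟩)
    · exact Or.inr ⟨x * s, u, by simp [mul_assoc]⟩

/-- The `J`-class of `a`. -/
def jClass (a : S) : Set S := {b | jSet S b = jSet S a}

/-- `I(a) = J(a) \ J_a`. -/
def iSet (a : S) : Set S := jSet S a \ jClass S a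

/-- The Rees congruence on `J(a)`: the (smallest) congruence identifying all elements of
`I(a)` with each other. -/
def reesCon (a : S) : Con (jSub S a) :=
  conGen (fun x y : jSub S a => (x : S) ∈ iSet S a ∧ (y : S) ∈ iSet S a)

/-- The principal factor of `S` at `a`: the Rees quotient `J(a)/I(a)` (when `I(a) = ∅`
the identified relation is empty and the quotient is a copy of `J(a)` itself). -/
abbrev principalFactor (a : S) := (reesCon S a).Quotient

/-- A null semigroup: all products are equal (to a zero element). -/
def IsNullSemigroup (T : Type*) [Semigroup T] : Prop := ∃ z : T, ∀ x y : T, x * y = z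

/-- A (nonempty) two-sided ideal. -/
def IsIdeal (T : Type*) [Semigroup T] (A : Set T) : Prop :=
  A.Nonempty ∧ ∀ x ∈ A, ∀ s : T, s * x ∈ A ∧ x * s ∈ A

/-- A simple semigroup: its only ideal is the whole semigroup. -/
def IsSimple (T : Type*) [Semigroup T] : Prop :=
  ∀ A : Set T, IsIdeal T A → A = Set.univ

/-- A completely simple semigroup: simple with a primitive idempotent. -/
def IsCompletelySimple (T : Type*) [Semigroup T] : Prop :=
  IsSimple T ∧ ∃ e : T, e * e = e ∧
    ∀ f : T, f * f = f → e * f = f → f * e = f → f = e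

/-- `z` is a zero element of `T`. -/
def IsZeroElem (T : Type*) [Semigroup T] (z : T) : Prop := ∀ x : T, z * x = z ∧ x * z = z

/-- A completely 0-simple semigroup: it has a zero `z`, some product is nonzero, its only
ideals are `{z}` and `T`, and it has a primitive (nonzero) idempotent. -/
def IsCompletely0Simple (T : Type*) [Semigroup T] : Prop :=
  ∃ z : T, IsZeroElem T z ∧ (∃ x y : T, x * y ≠ z) ∧
    (∀ A : Set T, IsIdeal T A → A = {z} ∨ A = Set.univ) ∧
    ∃ e : T, e ≠ z ∧ e * e = e ∧
      ∀ f : T, f * f = f → f ≠ z → e * f = f → f * e = f → f = e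

end PrincipalFactors

/-! In an ℵ₀-categorical semigroup every element has an idempotent power: among the pairs
`(x, xⁱ)` two lie in one orbit, and an automorphism fixing `x` fixes its powers, so
`xⁱ = xʲ` for some `i < j`. In such a periodic semigroup `J(x) = J(xu)` forces `x ∈ xuS¹`
(and dually), so a `J`-class containing the product of two of its elements contains an
idempotent, all of its elements are regular, and each of them is obtained from any other by
multiplying on both sides by elements of `J(a)`; hence the principal factor is completely
simple or completely 0-simple, and otherwise it is null. Automorphisms of `S` fixing `a` induce
automorphisms of the principal factor at `a`, which carries the finiteness of orbits over,
and an automorphism sending `a` to `b` identifies the principal factors at `a` and `b`. -/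

section Monoid

variable {M : Type*} [Monoid M]

/-- Green's `J`-preorder; for a semigroup `S` it is used in the monoid `WithOne S`, i.e. `S¹`. -/
def JLe (x y : M) : Prop := ∃ s t, x = s * y * t

infix:50 " ≤J " => JLe

theorem JLe.refl (x : M) : x ≤J x := ⟨1, 1, by simp⟩

theorem JLe.trans {x y z : M} : x ≤J y → y ≤J z → x ≤J z := by
  rintro ⟨s, t, rfl⟩ ⟨s', t', rfl⟩
  exact ⟨s * s', t' * t, by simp only [mul_assoc]⟩

theorem mul_left_jLe (s x : M) : s * x ≤J x := ⟨s, 1, by simp⟩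

theorem mul_right_jLe (x s : M) : x * s ≤J x := ⟨1, s, by simp⟩

theorem JLe.map {N F : Type*} [Monoid N] [FunLike F M N] [MonoidHomClass F M N] (f : F)
    {x y : M} : x ≤J y → f x ≤J f y := by
  rintro ⟨s, t, rfl⟩
  exact ⟨f s, f t, by simp only [map_mul]⟩

theorem exists_eq_mul_mul_mul_of_mul_mul_self_eq {x y c : M} (hc : y * c * y = y)
    (hyx : y ≤J x) : ∃ s t, y = y * s * x * (t * y) := by
  obtain ⟨s, t, hst⟩ := hyx
  refine ⟨c * s, t * c, ?_⟩
  calc y = y * c * y * c * y := by rw [hc, hc]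
    _ = y * c * (s * x * t) * c * y := by rw [← hst]
    _ = y * (c * s) * x * (t * c * y) := by simp only [mul_assoc]

theorem exists_isIdempotentElem_pow_of_pow_add_eq {x : M} {m d : ℕ} (hd : 0 < d)
    (h : x ^ (m + d) = x ^ m) : ∃ n, 0 < n ∧ IsIdempotentElem (x ^ n) := by
  have hk : ∀ k, x ^ (m + k * d) = x ^ m := by
    intro k
    induction k with
    | zero => simp
    | succ k ih => rw [add_mul, one_mul, ← add_assoc, pow_add, ih, ← pow_add, h]
  obtain ⟨n, hn⟩ : ∃ n, n = (m + 1) * d := ⟨_, rfl⟩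
  have hmn : m < n := by rw [hn]; nlinarith
  refine ⟨n, by omega, ?_⟩
  calc x ^ n * x ^ n = x ^ (n - m) * x ^ (m + (m + 1) * d) := by
        rw [← pow_add, ← pow_add, ← hn]; congr 1; omega
    _ = x ^ n := by rw [hk, ← pow_add]; congr 1; omega

theorem pow_mul_mul_pow_of_eq_mul_mul {x s w : M} (h : x = s * x * w) (n : ℕ) :
    s ^ n * x * w ^ n = x := by
  induction n with
  | zero => simp
  | succ n ih =>
    calc s ^ (n + 1) * x * w ^ (n + 1) = s ^ n * (s * x * w) * w ^ n := by
          rw [pow_succ, pow_succ']; simp only [mul_assoc]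
      _ = x := by rw [← h, ih]

def IsPeriodic (M : Type*) [Monoid M] : Prop := ∀ x : M, ∃ n, 0 < n ∧ IsIdempotentElem (x ^ n)

namespace IsPeriodic

variable (hM : IsPeriodic M)
include hM

theorem exists_pow_mul_eq {x s w : M} (h : x = s * x * w) : ∃ n, 0 < n ∧ s ^ n * x = x := by
  obtain ⟨n, hn, he⟩ := hM s
  have hx := pow_mul_mul_pow_of_eq_mul_mul h n
  refine ⟨n, hn, ?_⟩
  calc s ^ n * x = s ^ n * (s ^ n * x * w ^ n) := by rw [hx]
    _ = x := by rw [← mul_assoc, ← mul_assoc, he.eq, hx]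

theorem exists_mul_pow_eq {x s w : M} (h : x = s * x * w) : ∃ n, 0 < n ∧ x * w ^ n = x := by
  obtain ⟨n, hn, he⟩ := hM w
  have hx := pow_mul_mul_pow_of_eq_mul_mul h n
  refine ⟨n, hn, ?_⟩
  calc x * w ^ n = s ^ n * x * w ^ n * w ^ n := by rw [hx]
    _ = x := by rw [mul_assoc _ (w ^ n), he.eq, hx]

theorem exists_eq_mul_mul_of_jLe_mul_right {x u : M} (h : x ≤J x * u) :
    ∃ v, x = x * u * v := by
  obtain ⟨s, t, hst⟩ := h
  obtain ⟨n, hn, hx⟩ := hM.exists_mul_pow_eq (w := u * t) (by simpa only [mul_assoc] using hst)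
  obtain ⟨k, rfl⟩ := Nat.exists_eq_add_one_of_ne_zero hn.ne'
  refine ⟨t * (u * t) ^ k, ?_⟩
  calc x = x * (u * t) ^ (k + 1) := hx.symm
    _ = x * u * (t * (u * t) ^ k) := by rw [pow_succ']; simp only [mul_assoc]

theorem exists_eq_mul_mul_of_jLe_mul_left {x u : M} (h : x ≤J u * x) :
    ∃ v, x = v * u * x := by
  obtain ⟨s, t, hst⟩ := h
  obtain ⟨n, hn, hx⟩ := hM.exists_pow_mul_eq (s := s * u) (by simpa only [mul_assoc] using hst)
  obtain ⟨k, rfl⟩ := Nat.exists_eq_add_one_of_ne_zero hn.ne'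
  refine ⟨(s * u) ^ k * s, ?_⟩
  calc x = (s * u) ^ (k + 1) * x := hx.symm
    _ = (s * u) ^ k * s * u * x := by rw [pow_succ]; simp only [mul_assoc]

theorem exists_isIdempotentElem_of_jLe_mul {x y : M} (h : x ≤J x * y) :
    ∃ e, IsIdempotentElem e ∧ x ≤J e ∧ e ≤J y := by
  obtain ⟨v, hv⟩ := hM.exists_eq_mul_mul_of_jLe_mul_right h
  obtain ⟨n, hn, he⟩ := hM (y * v)
  obtain ⟨k, rfl⟩ := Nat.exists_eq_add_one_of_ne_zero hn.ne'
  have hx : x * (y * v) ^ (k + 1) = x := by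
    simpa using pow_mul_mul_pow_of_eq_mul_mul (s := (1 : M))
      (by rw [one_mul, ← mul_assoc]; exact hv) (k + 1)
  refine ⟨(y * v) ^ (k + 1), by simpa using he, ⟨x, 1, by rw [mul_one, hx]⟩,
    ⟨1, v * (y * v) ^ k, ?_⟩⟩
  rw [pow_succ']; simp only [one_mul, mul_assoc]

theorem exists_mul_mul_self_eq {e y : M} (he : IsIdempotentElem e) (hey : e ≤J y)
    (hye : y ≤J e) : ∃ c, y * c * y = y := by
  obtain ⟨t, u, hetu⟩ := hey
  set m := y * u with hm
  have hem : e = t * m := by rw [hetu, mul_assoc]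
  obtain ⟨w, hw⟩ := hM.exists_eq_mul_mul_of_jLe_mul_left (x := m) (u := t)
    (hem ▸ (mul_right_jLe y u).trans hye)
  rw [mul_assoc, ← hem] at hw
  have hmtm : m * t * m = m := by
    calc m * t * m = w * e * e := by rw [mul_assoc, ← hem, ← hw]
      _ = m := by rw [mul_assoc, he.eq, ← hw]
  obtain ⟨v, hv⟩ := hM.exists_eq_mul_mul_of_jLe_mul_right (x := y) (u := u)
    (hye.trans ⟨t, 1, by rw [mul_one, hem]⟩)
  refine ⟨u * t, ?_⟩
  calc y * (u * t) * y = m * t * (m * v) := by rw [← hv, hm]; simp only [mul_assoc]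
    _ = y := by rw [← mul_assoc, hmtm, ← hv]

theorem eq_of_isIdempotentElem_of_jLe {e f : M} (hf : IsIdempotentElem f) (hef : e ≤J f)
    (hef' : e * f = f) (hfe : f * e = f) : f = e := by
  obtain ⟨v, hv⟩ := hM.exists_eq_mul_mul_of_jLe_mul_right (hef'.symm ▸ hef)
  rw [hef'] at hv
  calc f = f * e := hfe.symm
    _ = f * f * v := by rw [hv, mul_assoc]
    _ = e := by rw [hf.eq, hv]

end IsPeriodic

end Monoid

section JClasses

variable {S : Type*} [Semigroup S]

theorem exists_mem_jSet_coe_eq {a : S} {z : WithOne S} (h : z ≤J a) :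
    ∃ x ∈ jSet S a, (x : WithOne S) = z := by
  obtain ⟨s, t, rfl⟩ := h
  cases s with
  | one => cases t with
    | one => exact ⟨a, Or.inl (Or.inl (Or.inl rfl)), by simp⟩
    | coe t => exact ⟨a * t, Or.inl (Or.inl (Or.inr ⟨t, rfl⟩)), by simp⟩
  | coe s => cases t with
    | one => exact ⟨s * a, Or.inl (Or.inr ⟨s, rfl⟩), by simp⟩
    | coe t => exact ⟨s * a * t, Or.inr ⟨s, t, rfl⟩, by simp⟩

theorem mem_jSet_iff {a x : S} : x ∈ jSet S a ↔ (x : WithOne S) ≤J a := by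
  refine ⟨?_, fun h => ?_⟩
  · rintro (((rfl | ⟨s, rfl⟩) | ⟨s, rfl⟩) | ⟨s, t, rfl⟩)
    · exact JLe.refl _
    · exact ⟨1, s, by simp⟩
    · exact ⟨s, 1, by simp⟩
    · exact ⟨s, t, by simp⟩
  · obtain ⟨y, hy, hyx⟩ := exists_mem_jSet_coe_eq h
    rwa [← WithOne.coe_inj.1 hyx]

theorem self_mem_jSet (a : S) : a ∈ jSet S a := mem_jSet_iff.2 (JLe.refl _)

theorem jSet_subset_jSet {a x : S} (h : x ∈ jSet S a) : jSet S x ⊆ jSet S a :=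
  fun _ hy => mem_jSet_iff.2 ((mem_jSet_iff.1 hy).trans (mem_jSet_iff.1 h))

theorem mem_jClass_iff {a b : S} : b ∈ jClass S a ↔ b ∈ jSet S a ∧ a ∈ jSet S b :=
  ⟨fun h => ⟨h ▸ self_mem_jSet b, h ▸ self_mem_jSet a⟩,
    fun h => (jSet_subset_jSet h.1).antisymm (jSet_subset_jSet h.2)⟩

theorem mem_jSet_of_mem_jClass {a x y : S} (hx : x ∈ jClass S a) (hy : y ∈ jClass S a) :
    x ∈ jSet S y :=
  jSet_subset_jSet (mem_jClass_iff.1 hy).2 (mem_jClass_iff.1 hx).1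

theorem notMem_iSet_of_mem_jClass {a x : S} (h : x ∈ jClass S a) : x ∉ iSet S a :=
  fun h' => h'.2 h

theorem mem_jClass_of_notMem_iSet {a x : S} (hx : x ∈ jSet S a) (h : x ∉ iSet S a) :
    x ∈ jClass S a :=
  not_not.1 fun h' => h ⟨hx, h'⟩

theorem mem_iSet_of_mem_jSet {a x y : S} (hx : x ∈ iSet S a) (hy : y ∈ jSet S x) :
    y ∈ iSet S a :=
  ⟨jSet_subset_jSet hx.1 hy, fun h => hx.2 <| mem_jClass_iff.2
    ⟨hx.1, jSet_subset_jSet hy (mem_jClass_iff.1 h).2⟩⟩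

theorem mul_left_mem_iSet {a x : S} (hx : x ∈ iSet S a) (s : S) : s * x ∈ iSet S a :=
  mem_iSet_of_mem_jSet hx (mem_jSet_iff.2 (mul_left_jLe (s : WithOne S) x))

theorem mul_right_mem_iSet {a x : S} (hx : x ∈ iSet S a) (s : S) : x * s ∈ iSet S a :=
  mem_iSet_of_mem_jSet hx (mem_jSet_iff.2 (mul_right_jLe (x : WithOne S) s))

theorem map_mem_jSet {S' : Type*} [Semigroup S'] (f : S →ₙ* S') {a x : S}
    (h : x ∈ jSet S a) : f x ∈ jSet S' (f a) := by
  rw [mem_jSet_iff] at h ⊢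
  simpa using h.map (WithOne.mapMulHom f)

variable {S' : Type*} [Semigroup S'] (φ : S ≃* S') {a x : S}

theorem map_mem_jSet_iff : φ x ∈ jSet S' (φ a) ↔ x ∈ jSet S a :=
  ⟨fun h => by simpa using map_mem_jSet φ.symm.toMulHom h, map_mem_jSet φ.toMulHom⟩

theorem map_mem_iSet_iff : φ x ∈ iSet S' (φ a) ↔ x ∈ iSet S a := by
  simp only [iSet, Set.mem_sdiff, mem_jClass_iff, map_mem_jSet_iff]

end JClasses

section PrincipalFactor

variable {S : Type*} [Semigroup S] {a : S}

theorem reesCon_iff {x y : jSub S a} :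
    reesCon S a x y ↔ x = y ∨ ((x : S) ∈ iSet S a ∧ (y : S) ∈ iSet S a) := by
  refine ⟨fun h => ?_, ?_⟩
  · induction h with
    | of x y h => exact Or.inr h
    | refl x => exact Or.inl rfl
    | symm _ ih => exact ih.imp Eq.symm And.symm
    | trans _ _ ih₁ ih₂ =>
      rcases ih₁ with rfl | ⟨hx, hy⟩ <;> rcases ih₂ with rfl | ⟨hy', hz⟩
      exacts [Or.inl rfl, Or.inr ⟨hy', hz⟩, Or.inr ⟨hx, hy⟩, Or.inr ⟨hx, hz⟩]
    | mul _ _ ih₁ ih₂ =>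
      rcases ih₁ with rfl | ⟨hw, hx⟩ <;> rcases ih₂ with rfl | ⟨hy, hz⟩
      exacts [Or.inl rfl, Or.inr ⟨mul_left_mem_iSet hy _, mul_left_mem_iSet hz _⟩,
        Or.inr ⟨mul_right_mem_iSet hw _, mul_right_mem_iSet hx _⟩,
        Or.inr ⟨mul_right_mem_iSet hw _, mul_right_mem_iSet hx _⟩]
  · rintro (rfl | h)
    exacts [(reesCon S a).refl x, ConGen.Rel.of x y h]

theorem principalFactor.exists_mk_eq (q : principalFactor S a) :
    ∃ x : jSub S a, (x : principalFactor S a) = q :=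
  Quot.exists_rep q

theorem principalFactor.mk_eq_mk_iff {x y : jSub S a} :
    (x : principalFactor S a) = y ↔ x = y ∨ ((x : S) ∈ iSet S a ∧ (y : S) ∈ iSet S a) :=
  (Con.eq _).trans reesCon_iff

theorem principalFactor.mk_eq_mk_of_mem_iSet {x y : jSub S a} (hx : (x : S) ∈ iSet S a)
    (hy : (y : S) ∈ iSet S a) : (x : principalFactor S a) = y :=
  mk_eq_mk_iff.2 (Or.inr ⟨hx, hy⟩)

theorem principalFactor.eq_of_mk_eq_mk {x y : jSub S a} (h : (x : principalFactor S a) = y)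
    (hx : (x : S) ∉ iSet S a) : x = y :=
  (mk_eq_mk_iff.1 h).resolve_right fun h' => hx h'.1

end PrincipalFactor

section Congr

variable {S S' : Type*} [Semigroup S] [Semigroup S'] (φ : S ≃* S') {a : S} {b : S'}

def jSubCongr (h : φ a = b) : jSub S a ≃* jSub S' b where
  toFun x := ⟨φ x, h ▸ (map_mem_jSet_iff φ).2 x.2⟩
  invFun y := ⟨φ.symm y, (map_mem_jSet_iff φ).1 (by rw [φ.apply_symm_apply, h]; exact y.2)⟩
  left_inv x := by simp
  right_inv y := by simp
  map_mul' x y := by ext; simp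

def principalFactorCongr (h : φ a = b) : principalFactor S a ≃* principalFactor S' b :=
  Con.congr (jSubCongr φ h) <| by
    subst h
    rw [reesCon, reesCon, Con.comap_conGen_equiv]
    simp [jSubCongr, map_mem_iSet_iff]

end Congr

section Structure

variable {S : Type*} [Semigroup S] {a : S}

open principalFactor

theorem exists_isIdempotentElem_mem_jClass (hM : IsPeriodic (WithOne S)) {p q : S}
    (hp : p ∈ jClass S a) (hq : q ∈ jSet S a) (hpq : p * q ∈ jClass S a) :
    ∃ e ∈ jClass S a, e * e = e := by
  have hppq : (p : WithOne S) ≤J p * q := mem_jSet_iff.1 (mem_jSet_of_mem_jClass hp hpq)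
  obtain ⟨e, he, hpe, heq⟩ := hM.exists_isIdempotentElem_of_jLe_mul hppq
  obtain ⟨e, -, rfl⟩ := exists_mem_jSet_coe_eq heq
  refine ⟨e, mem_jClass_iff.2 ⟨jSet_subset_jSet hq (mem_jSet_iff.2 heq), ?_⟩,
    WithOne.coe_injective he⟩
  exact jSet_subset_jSet (mem_jSet_iff.2 hpe) (mem_jClass_iff.1 hp).2

theorem exists_eq_mul_mul_of_mem_jClass (hM : IsPeriodic (WithOne S)) {e x y : S}
    (he : e ∈ jClass S a) (hee : e * e = e) (hx : x ∈ jClass S a) (hy : y ∈ jClass S a) :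
    ∃ α ∈ jSet S a, ∃ β ∈ jSet S a, y = α * x * β := by
  obtain ⟨c, hc⟩ := hM.exists_mul_mul_self_eq (e := (e : WithOne S)) (y := y)
    (WithOne.coe_inj.2 hee) (mem_jSet_iff.1 (mem_jSet_of_mem_jClass he hy))
    (mem_jSet_iff.1 (mem_jSet_of_mem_jClass hy he))
  obtain ⟨s, t, hst⟩ := exists_eq_mul_mul_mul_of_mul_mul_self_eq hc
    (mem_jSet_iff.1 (mem_jSet_of_mem_jClass hy hx))
  have hya : (y : WithOne S) ≤J a := mem_jSet_iff.1 (mem_jClass_iff.1 hy).1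
  obtain ⟨α, hα, hαy⟩ := exists_mem_jSet_coe_eq ((mul_right_jLe _ s).trans hya)
  obtain ⟨β, hβ, hβy⟩ := exists_mem_jSet_coe_eq ((mul_left_jLe t _).trans hya)
  exact ⟨α, hα, β, hβ, WithOne.coe_injective (by simp [hαy, hβy, ← hst])⟩

theorem IsIdeal.eq_univ_of_mk_mem (hM : IsPeriodic (WithOne S)) {e : S} (he : e ∈ jClass S a)
    (hee : e * e = e) {A : Set (principalFactor S a)} (hA : IsIdeal _ A) {x : jSub S a}
    (hx : (x : S) ∈ jClass S a) (hxA : (x : principalFactor S a) ∈ A) : A = Set.univ := by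
  refine Set.eq_univ_of_forall fun q => ?_
  obtain ⟨y, rfl⟩ := exists_mk_eq q
  by_cases hy : (y : S) ∈ jClass S a
  · obtain ⟨α, hα, β, hβ, hyx⟩ := exists_eq_mul_mul_of_mem_jClass hM he hee hx hy
    have : y = ⟨α, hα⟩ * x * ⟨β, hβ⟩ := Subtype.ext hyx
    rw [this]
    exact (hA.2 _ (hA.2 _ hxA (⟨α, hα⟩ : jSub S a)).1 (⟨β, hβ⟩ : jSub S a)).2
  · have hyI : (y : S) ∈ iSet S a := ⟨y.2, hy⟩
    rw [mk_eq_mk_of_mem_iSet (y := y * x) hyI (mul_right_mem_iSet hyI x)]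
    exact (hA.2 _ hxA (y : principalFactor S a)).1

theorem principalFactor.mk_eq_of_idempotent_le (hM : IsPeriodic (WithOne S))
    {e y : jSub S a} (he : (e : S) ∈ jClass S a) (hy : (y : S) ∈ jClass S a)
    (hyy : (y : principalFactor S a) * y = y) (hey : (e : principalFactor S a) * y = y)
    (hye : (y : principalFactor S a) * e = y) : (y : principalFactor S a) = e := by
  have hdesc : ∀ z : jSub S a, (z : principalFactor S a) = y → z = y := fun z h =>
    (eq_of_mk_eq_mk h.symm (notMem_iSet_of_mem_jClass hy)).symm
  have := hM.eq_of_isIdempotentElem_of_jLe (e := (e : WithOne S)) (f := y)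
    (WithOne.coe_inj.2 (congrArg Subtype.val (hdesc _ hyy)))
    (mem_jSet_iff.1 (mem_jSet_of_mem_jClass he hy))
    (WithOne.coe_inj.2 (congrArg Subtype.val (hdesc _ hey)))
    (WithOne.coe_inj.2 (congrArg Subtype.val (hdesc _ hye)))
  rw [Subtype.ext (WithOne.coe_injective this)]

end Structure

section Classification

variable {S : Type*} [Semigroup S] {a : S}

open principalFactor

theorem isNullSemigroup_principalFactor
    (h : ∀ p ∈ jClass S a, ∀ q ∈ jClass S a, p * q ∉ jClass S a) :
    IsNullSemigroup (principalFactor S a) := by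
  have hmul : ∀ u v : jSub S a, (u : S) * v ∈ iSet S a := by
    intro u v
    by_cases hu : (u : S) ∈ iSet S a
    · exact mul_right_mem_iSet hu v
    by_cases hv : (v : S) ∈ iSet S a
    · exact mul_left_mem_iSet hv u
    exact ⟨(u * v).2, h u (mem_jClass_of_notMem_iSet u.2 hu) v
      (mem_jClass_of_notMem_iSet v.2 hv)⟩
  let o : jSub S a := ⟨a, self_mem_jSet a⟩
  refine ⟨((o * o : jSub S a) : principalFactor S a), fun x y => ?_⟩
  obtain ⟨u, rfl⟩ := exists_mk_eq x
  obtain ⟨v, rfl⟩ := exists_mk_eq y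
  exact mk_eq_mk_of_mem_iSet (x := u * v) (hmul u v) (hmul o o)

variable (hM : IsPeriodic (WithOne S)) {e : S} (he : e ∈ jClass S a) (hee : e * e = e)
include hM he hee

theorem isCompletelySimple_principalFactor (hI : iSet S a = ∅) :
    IsCompletelySimple (principalFactor S a) := by
  have hJ : ∀ x : jSub S a, (x : S) ∈ jClass S a := fun x =>
    mem_jClass_of_notMem_iSet x.2 (by simp [hI])
  let E : jSub S a := ⟨e, (mem_jClass_iff.1 he).1⟩
  refine ⟨fun A hA => ?_, E, congrArg _ (Subtype.ext hee), fun f hff hEf hfE => ?_⟩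
  · obtain ⟨q, hq⟩ := hA.1
    obtain ⟨x, rfl⟩ := exists_mk_eq q
    exact hA.eq_univ_of_mk_mem hM he hee (hJ x) hq
  · obtain ⟨y, rfl⟩ := exists_mk_eq f
    exact mk_eq_of_idempotent_le hM (e := E) he (hJ y) hff hEf hfE

theorem isCompletely0Simple_principalFactor (hI : (iSet S a).Nonempty) :
    IsCompletely0Simple (principalFactor S a) := by
  obtain ⟨w, hw⟩ := hI
  let W : jSub S a := ⟨w, hw.1⟩
  let E : jSub S a := ⟨e, (mem_jClass_iff.1 he).1⟩
  have hzero : ∀ x : jSub S a, (x : S) ∈ iSet S a → (x : principalFactor S a) = W :=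
    fun x hx => mk_eq_mk_of_mem_iSet hx hw
  have hJ : ∀ x : jSub S a, (x : principalFactor S a) ≠ W → (x : S) ∈ jClass S a :=
    fun x hx => mem_jClass_of_notMem_iSet x.2 fun h => hx (hzero x h)
  have hE : (E : principalFactor S a) ≠ W := fun h => by
    have hew : e = w := congrArg Subtype.val (eq_of_mk_eq_mk h (notMem_iSet_of_mem_jClass he))
    exact notMem_iSet_of_mem_jClass he (hew ▸ hw)
  refine ⟨W, fun q => ?_, ⟨E, E, ?_⟩, fun A hA => ?_, E, hE, congrArg _ (Subtype.ext hee),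
    fun f hff hfW hEf hfE => ?_⟩
  · obtain ⟨x, rfl⟩ := exists_mk_eq q
    exact ⟨hzero (W * x) (mul_right_mem_iSet hw x), hzero (x * W) (mul_left_mem_iSet hw x)⟩
  · rwa [← Con.coe_mul, show E * E = E from Subtype.ext hee]
  · by_cases hAW : A = {(W : principalFactor S a)}
    · exact Or.inl hAW
    obtain ⟨q, hqA, hqW⟩ : ∃ q ∈ A, q ≠ W := by
      by_contra! h
      obtain ⟨q, hq⟩ := hA.1
      exact hAW (Set.eq_singleton_iff_unique_mem.2 ⟨h q hq ▸ hq, h⟩)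
    obtain ⟨x, rfl⟩ := exists_mk_eq q
    exact Or.inr (hA.eq_univ_of_mk_mem hM he hee (hJ x hqW) hqA)
  · obtain ⟨y, rfl⟩ := exists_mk_eq f
    exact mk_eq_of_idempotent_le hM (e := E) he (hJ y hfW) hff hEf hfE

end Classification

theorem principalFactor_trichotomy {S : Type*} [Semigroup S] (hM : IsPeriodic (WithOne S))
    (a : S) : IsNullSemigroup (principalFactor S a) ∨ IsCompletelySimple (principalFactor S a) ∨
      IsCompletely0Simple (principalFactor S a) := by
  by_cases h : ∀ p ∈ jClass S a, ∀ q ∈ jClass S a, p * q ∉ jClass S a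
  · exact Or.inl (isNullSemigroup_principalFactor h)
  push Not at h
  obtain ⟨p, hp, q, hq, hpq⟩ := h
  obtain ⟨e, he, hee⟩ := exists_isIdempotentElem_mem_jClass hM hp (mem_jClass_iff.1 hq).1 hpq
  rcases (iSet S a).eq_empty_or_nonempty with hI | hI
  · exact Or.inr (Or.inl (isCompletelySimple_principalFactor hM he hee hI))
  · exact Or.inr (Or.inr (isCompletely0Simple_principalFactor hM he hee hI))

section Aleph0Categorical

variable {S : Type*} [Semigroup S] {n : ℕ}

theorem AutRel.symm {x y : Fin n → S} : AutRel S x y → AutRel S y x := fun ⟨φ, h⟩ =>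
  ⟨φ.symm, fun k => by rw [← h k, φ.symm_apply_apply]⟩

theorem AutRel.trans {x y z : Fin n → S} : AutRel S x y → AutRel S y z → AutRel S x z :=
  fun ⟨φ, h⟩ ⟨ψ, h'⟩ => ⟨φ.trans ψ, fun k => by simp [h, h']⟩

theorem Aleph0Categorical.exists_classifier (hS : Aleph0Categorical S) (hn : 1 ≤ n) :
    ∃ κ : (Fin n → S) → Fin n → S, (Set.range κ).Finite ∧
      ∀ x y, κ x = κ y → AutRel S x y := by
  obtain ⟨t, ht, hrep⟩ := hS n hn
  choose κ hκt hκ using hrep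
  exact ⟨κ, ht.subset (Set.range_subset_iff.2 hκt),
    fun x y hxy => (hκ x).symm.trans (hxy ▸ hκ y)⟩

theorem exists_finite_autRel_of_classifier {α : Type*} (κ : (Fin n → S) → α)
    (hκ : (Set.range κ).Finite) (h : ∀ x y, κ x = κ y → AutRel S x y) :
    ∃ t : Set (Fin n → S), t.Finite ∧ ∀ x, ∃ y ∈ t, AutRel S y x := by
  obtain ⟨u, hu, hinj⟩ := Set.exists_image_eq_and_injOn Set.univ κ
  rw [Set.image_univ] at hu
  refine ⟨u, Set.Finite.of_finite_image (hu ▸ hκ) hinj, fun x => ?_⟩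
  obtain ⟨y, hy, hyx⟩ : κ x ∈ κ '' u := hu ▸ Set.mem_range_self x
  exact ⟨y, hy, h y x hyx⟩

theorem Aleph0Categorical.isPeriodic_withOne (hS : Aleph0Categorical S) :
    IsPeriodic (WithOne S) := by
  intro x
  cases x with
  | one => exact ⟨1, one_pos, by simp [IsIdempotentElem]⟩
  | coe x =>
    have hpow : ∀ i, ∃ y : S, (y : WithOne S) = (x : WithOne S) ^ (i + 1) := by
      intro i
      induction i with
      | zero => exact ⟨x, by simp⟩
      | succ i ih =>
        obtain ⟨y, hy⟩ := ih
        exact ⟨y * x, by rw [WithOne.coe_mul, hy, ← pow_succ]⟩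
    choose y hy using hpow
    obtain ⟨κ, hfin, hκ⟩ := hS.exists_classifier (n := 2) (by norm_num)
    obtain ⟨i, j, hij, hκij⟩ := Set.Finite.exists_lt_map_eq_of_forall_mem
      (f := fun i => κ ![x, y i]) (fun i => Set.mem_range_self _) hfin
    obtain ⟨φ, hφ⟩ := hκ _ _ hκij
    have hx : φ x = x := hφ 0
    have hyij : φ (y i) = y j := hφ 1
    refine exists_isIdempotentElem_pow_of_pow_add_eq (m := i + 1) (d := j - i) (by omega) ?_
    calc (x : WithOne S) ^ (i + 1 + (j - i)) = y j := by rw [hy]; congr 1; omega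
      _ = WithOne.mapMulHom φ.toMulHom (y i) := by simp [hyij]
      _ = (x : WithOne S) ^ (i + 1) := by rw [hy, map_pow]; simp [hx]

theorem aleph0Categorical_principalFactor (hS : Aleph0Categorical S) (a : S) :
    Aleph0Categorical (principalFactor S a) := by
  intro n _
  obtain ⟨κ, hfin, hκ⟩ := hS.exists_classifier (n := n + 1) (by omega)
  choose rep hrep using fun q : principalFactor S a => principalFactor.exists_mk_eq q
  let lift (c : Fin n → principalFactor S a) : Fin (n + 1) → S :=
    Fin.snoc (fun k => (rep (c k) : S)) a
  refine exists_finite_autRel_of_classifier (κ ∘ lift)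
    (hfin.subset (Set.range_comp_subset_range _ _)) fun c d hcd => ?_
  obtain ⟨φ, hφ⟩ := hκ _ _ hcd
  have ha : φ a = a := by simpa [lift] using hφ (Fin.last n)
  refine ⟨principalFactorCongr φ ha, fun k => ?_⟩
  have hk : φ (rep (c k)) = rep (d k) := by simpa [lift] using hφ k.castSucc
  rw [← hrep (c k), ← hrep (d k)]
  exact congrArg _ (Subtype.ext hk)

end Aleph0Categorical

theorem aleph0Categorical_principal_factors_general (S : Type*) [Semigroup S]
    (hcat : Aleph0Categorical S) :
    (∀ a : S, Aleph0Categorical (principalFactor S a)) ∧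
    (∀ a : S, IsNullSemigroup (principalFactor S a) ∨
      IsCompletelySimple (principalFactor S a) ∨
      IsCompletely0Simple (principalFactor S a)) ∧
    (∃ F : Set S, F.Finite ∧
      ∀ a : S, ∃ b ∈ F, Nonempty ((principalFactor S a) ≃* (principalFactor S b))) := by
  refine ⟨aleph0Categorical_principalFactor hcat, principalFactor_trichotomy
    hcat.isPeriodic_withOne, ?_⟩
  obtain ⟨t, ht, hrep⟩ := hcat 1 le_rfl
  refine ⟨(· 0) '' t, ht.image _, fun a => ?_⟩
  obtain ⟨b, hb, φ, hφ⟩ := hrep fun _ => a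
  exact ⟨b 0, Set.mem_image_of_mem _ hb, ⟨(principalFactorCongr φ (hφ 0)).symm⟩⟩

/-- Let `S` be a countable ℵ₀-categorical semigroup.  Then every principal factor of `S`
is ℵ₀-categorical; each principal factor is null, completely simple or completely
0-simple; and `S` has only finitely many principal factors up to isomorphism. -/
theorem aleph0Categorical_principal_factors (S : Type*) [Semigroup S] [Countable S]
    (hcat : Aleph0Categorical S) :
    (∀ a : S, Aleph0Categorical (principalFactor S a)) ∧
    (∀ a : S, IsNullSemigroup (principalFactor S a) ∨
      IsCompletelySimple (principalFactor S a) ∨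
      IsCompletely0Simple (principalFactor S a)) ∧
    (∃ F : Set S, F.Finite ∧
      ∀ a : S, ∃ b ∈ F, Nonempty ((principalFactor S a) ≃* (principalFactor S b))) :=
  aleph0Categorical_principal_factors_general S hcat
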